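/- For a dual-unitary U on C^q ⊗ C^q, the squared Frobenius norm of the shifted channel M̃₊[U] = M₊[U] - |Φ⁺⟩⟨Φ⁺| equals (q²-1)(1 - e_p(U)), where e_p(U) is the entangling power. -/

import Mathlib

/-!
Write `X = U^{T2} U^{T2†}`, so that `M₊[U] = q⁻¹ X^{R1}`. Realignment and partial transposition
only permute matrix entries, so they preserve the Frobenius inner product; since `X` is Hermitian,
`‖M₊[U]‖² = tr(X²)/q²`. The overlap `⟨Φ⁺|X^{R1}|Φ⁺⟩` equals `tr X / q`, and unitarity gives
`tr X = tr(UU†) = q²`, so both cross terms and `‖|Φ⁺⟩⟨Φ⁺|‖²` equal `1`, whence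
`‖M̃₊[U]‖² = tr(X²)/q² - 1`. On the other side `(US)^{R1} = (U^{T2})ᵀ S`, so
`E(US) = 1 - tr(X²)/q⁴`, and `(q²-1)(1 - e_p(U)) = tr(X²)/q² - 1` as well.
-/

open Matrix

/-- Matrices on the tensor product `ℂ^q ⊗ ℂ^q`, indexed by pairs. -/
abbrev MQ (q : ℕ) := Matrix (Fin q × Fin q) (Fin q × Fin q) ℂ

/-- Realignment R1 : `⟨βα|A^{R1}|ji⟩ = ⟨iα|A|jβ⟩`. -/
def R1 {q : ℕ} (A : MQ q) : MQ q := fun p r => A (r.2, p.2) (r.1, p.1)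

/-- Realignment R2 : `⟨ij|A^{R2}|αβ⟩ = ⟨iα|A|jβ⟩`. -/
def R2 {q : ℕ} (A : MQ q) : MQ q := fun p r => A (p.1, r.1) (p.2, r.2)

/-- The swap operator `S|iα⟩ = |αi⟩`. -/
def Swap (q : ℕ) : MQ q := fun p r => if p.1 = r.2 ∧ p.2 = r.1 then 1 else 0

/-- Partial transpose on the first factor: `⟨jα|A^{T1}|iβ⟩ = ⟨iα|A|jβ⟩`. -/
def T1 {q : ℕ} (A : MQ q) : MQ q := fun p r => A (r.1, p.2) (p.1, r.2)

/-- Partial transpose on the second factor: `⟨iβ|A^{T2}|jα⟩ = ⟨iα|A|jβ⟩`. -/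
def T2 {q : ℕ} (A : MQ q) : MQ q := fun p r => A (p.1, r.2) (r.1, p.2)

/-- The channel superoperator `M₊[U] = (1/q) (U^{T2} U^{T2†})^{R1}`. -/
noncomputable def Mplus {q : ℕ} (U : MQ q) : MQ q :=
  ((q : ℂ))⁻¹ • R1 (T2 U * (T2 U)ᴴ)

/-- The maximally entangled state `|Φ⁺⟩ = (1/√q) Σ_j |jj⟩`. -/
noncomputable def PhiPlus (q : ℕ) : Fin q × Fin q → ℂ :=
  fun p => if p.1 = p.2 then ((Real.sqrt q : ℝ) : ℂ)⁻¹ else 0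

/-- Operator entanglement `E(V) = 1 - (1/q⁴) tr[(V^{R1} V^{R1†})²]`. -/
noncomputable def opEnt {q : ℕ} (V : MQ q) : ℂ :=
  1 - (1 / (q : ℂ) ^ 4) * Matrix.trace ((R1 V * (R1 V)ᴴ) * (R1 V * (R1 V)ᴴ))

/-- Entangling power of a dual-unitary `U`:
`e_p(U) = E(US)/E(S)` with `E(S) = (q²-1)/q²`. -/
noncomputable def epDual {q : ℕ} (U : MQ q) : ℂ :=
  ((q : ℂ) ^ 2 / ((q : ℂ) ^ 2 - 1)) * opEnt (U * Swap q)

namespace Matrix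

variable {m n α : Type*} [Fintype m] [Fintype n]

theorem trace_mul_conjTranspose_eq_sum [NonUnitalNonAssocSemiring α] [Star α]
    (A B : Matrix m n α) : trace (A * Bᴴ) = ∑ i, ∑ j, A i j * star (B i j) := by
  simp [trace, mul_apply]

theorem trace_mul_mul_mul_comm [NonUnitalCommSemiring α] (A : Matrix m n α) (B : Matrix n m α) :
    trace (B * A * (B * A)) = trace (A * B * (A * B)) := by
  simp only [Matrix.mul_assoc]
  rw [trace_mul_comm]
  simp only [Matrix.mul_assoc]

theorem trace_vecMulVec_star_mul_conjTranspose [CommSemiring α] [StarRing α] (v : m → α) :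
    trace (vecMulVec v (star v) * (vecMulVec v (star v))ᴴ) = (star v ⬝ᵥ v) ^ 2 := by
  rw [conjTranspose_vecMulVec, star_star, vecMulVec_mul_vecMulVec, trace_vecMulVec,
    dotProduct_smul, dotProduct_comm v, smul_eq_mul, sq]

end Matrix

theorem Complex.inv_ofReal_sqrt_mul_self {x : ℝ} (hx : 0 ≤ x) :
    ((Real.sqrt x : ℝ) : ℂ)⁻¹ * ((Real.sqrt x : ℝ) : ℂ)⁻¹ = (x : ℂ)⁻¹ := by
  rw [← mul_inv, ← ofReal_mul, Real.mul_self_sqrt hx]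

section

variable {q : ℕ}

theorem trace_R1_mul_conjTranspose_R1 (A B : MQ q) :
    trace (R1 A * (R1 B)ᴴ) = trace (A * Bᴴ) := by
  simp only [trace_mul_conjTranspose_eq_sum, ← Fintype.sum_prod_type']
  exact Fintype.sum_equiv
    ⟨fun x => ((x.2.2, x.1.2), (x.2.1, x.1.1)), fun x => ((x.2.2, x.1.2), (x.2.1, x.1.1)),
      fun _ => rfl, fun _ => rfl⟩ _ _ fun _ => rfl

theorem trace_T2_mul_conjTranspose_T2 (A B : MQ q) :
    trace (T2 A * (T2 B)ᴴ) = trace (A * Bᴴ) := by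
  simp only [trace_mul_conjTranspose_eq_sum, ← Fintype.sum_prod_type']
  exact Fintype.sum_equiv
    ⟨fun x => ((x.1.1, x.2.2), (x.2.1, x.1.2)), fun x => ((x.1.1, x.2.2), (x.2.1, x.1.2)),
      fun _ => rfl, fun _ => rfl⟩ _ _ fun _ => rfl

theorem mul_Swap_apply (A : MQ q) (p r : Fin q × Fin q) : (A * Swap q) p r = A p r.swap := by
  simp [mul_apply, Swap, Fintype.sum_prod_type, ite_and, Prod.swap]

theorem Swap_mul_Swap : Swap q * Swap q = 1 := by
  ext p r
  simp [mul_Swap_apply, Swap, one_apply, Prod.ext_iff]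

theorem conjTranspose_Swap : (Swap q)ᴴ = Swap q := by
  ext p r
  simp [Swap, conjTranspose_apply, and_comm, eq_comm]

theorem R1_mul_Swap (U : MQ q) : R1 (U * Swap q) = (T2 U)ᵀ * Swap q := by
  ext p r
  simp [mul_Swap_apply, R1, T2]

theorem opEnt_mul_Swap (U : MQ q) :
    opEnt (U * Swap q) = 1 - 1 / (q : ℂ) ^ 4 * trace (T2 U * (T2 U)ᴴ * (T2 U * (T2 U)ᴴ)) := by
  have hR1 : R1 (U * Swap q) * (R1 (U * Swap q))ᴴ = ((T2 U)ᴴ * T2 U)ᵀ := by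
    rw [R1_mul_Swap, conjTranspose_mul, conjTranspose_Swap, Matrix.mul_assoc,
      ← Matrix.mul_assoc (Swap q), Swap_mul_Swap, Matrix.one_mul,
      conjTranspose_transpose_eq_transpose_conjTranspose, ← transpose_mul]
  rw [opEnt, hR1, ← transpose_mul, trace_transpose, trace_mul_mul_mul_comm]

theorem star_PhiPlus : star (PhiPlus q) = PhiPlus q := by
  ext p
  simp only [PhiPlus, Pi.star_apply]
  split_ifs <;> simp

theorem PhiPlus_dotProduct_mulVec (A : MQ q) :
    PhiPlus q ⬝ᵥ (A *ᵥ PhiPlus q) = (q : ℂ)⁻¹ * ∑ i, ∑ j, A (i, i) (j, j) := by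
  have hc (z : ℂ) :
      ((Real.sqrt q : ℝ) : ℂ)⁻¹ * (z * ((Real.sqrt q : ℝ) : ℂ)⁻¹) = (q : ℂ)⁻¹ * z := by
    rw [mul_comm z, ← mul_assoc, Complex.inv_ofReal_sqrt_mul_self q.cast_nonneg,
      Complex.ofReal_natCast]
  simp only [dotProduct, mulVec, PhiPlus, Fintype.sum_prod_type, mul_ite, ite_mul, mul_zero,
    zero_mul, Finset.sum_ite_eq, Finset.mem_univ, if_true, Finset.mul_sum, Finset.sum_ite_irrel,
    Finset.sum_const_zero, hc]

theorem sum_R1_apply_diag (A : MQ q) : ∑ i, ∑ j, R1 A (i, i) (j, j) = trace A := by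
  rw [trace, Fintype.sum_prod_type, Finset.sum_comm]
  rfl

theorem PhiPlus_dotProduct_self (hq : q ≠ 0) : PhiPlus q ⬝ᵥ PhiPlus q = 1 := by
  simp [dotProduct, PhiPlus, Fintype.sum_prod_type, Complex.inv_ofReal_sqrt_mul_self, hq]

theorem trace_R1_mul_PhiPlus_proj (A : MQ q) :
    trace (R1 A * vecMulVec (PhiPlus q) (star (PhiPlus q))) = (q : ℂ)⁻¹ * trace A := by
  rw [star_PhiPlus, mul_vecMulVec, trace_vecMulVec, dotProduct_comm, PhiPlus_dotProduct_mulVec,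
    sum_R1_apply_diag]

theorem trace_Mplus_mul_conjTranspose (U : MQ q) :
    trace (Mplus U * (Mplus U)ᴴ) =
      (q : ℂ)⁻¹ ^ 2 * trace (T2 U * (T2 U)ᴴ * (T2 U * (T2 U)ᴴ)) := by
  have hX : (T2 U * (T2 U)ᴴ)ᴴ = T2 U * (T2 U)ᴴ := by
    rw [conjTranspose_mul, conjTranspose_conjTranspose]
  rw [Mplus, conjTranspose_smul, Matrix.smul_mul, Matrix.mul_smul, trace_smul, trace_smul,
    trace_R1_mul_conjTranspose_R1, hX, star_inv₀, star_natCast, smul_smul, smul_eq_mul, sq]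

theorem trace_Mplus_mul_PhiPlus_proj (U : MQ q) :
    trace (Mplus U * vecMulVec (PhiPlus q) (star (PhiPlus q))) =
      (q : ℂ)⁻¹ ^ 2 * trace (U * Uᴴ) := by
  rw [Mplus, Matrix.smul_mul, trace_smul, trace_R1_mul_PhiPlus_proj,
    trace_T2_mul_conjTranspose_T2, smul_eq_mul, ← mul_assoc, sq]

end

theorem norm_sq_shifted_channel_general (q : ℕ) (hq : 2 ≤ q) (U : MQ q)
    (hU : U ∈ Matrix.unitaryGroup (Fin q × Fin q) ℂ) :
    Matrix.trace ((Mplus U - vecMulVec (PhiPlus q) (star (PhiPlus q))) *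
        (Mplus U - vecMulVec (PhiPlus q) (star (PhiPlus q)))ᴴ) =
      ((q : ℂ) ^ 2 - 1) * (1 - epDual U) := by
  set P := vecMulVec (PhiPlus q) (star (PhiPlus q))
  have hq0 : (q : ℂ) ≠ 0 := by norm_cast; omega
  have hq1 : (q : ℂ) ^ 2 - 1 ≠ 0 := by
    rw [sub_ne_zero]
    norm_cast
    nlinarith
  have hP : Pᴴ = P := by simp [P, star_PhiPlus]
  have hMP : trace (Mplus U * Pᴴ) = 1 := by
    rw [hP, trace_Mplus_mul_PhiPlus_proj, ← star_eq_conjTranspose, mem_unitaryGroup_iff.mp hU,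
      trace_one, Fintype.card_prod, Fintype.card_fin, Nat.cast_mul, inv_pow, ← sq,
      inv_mul_cancel₀ (pow_ne_zero 2 hq0)]
  have hPM : trace (P * (Mplus U)ᴴ) = 1 := by
    rw [← conjTranspose_conjTranspose P, ← conjTranspose_mul, trace_conjTranspose, hMP, star_one]
  have hPP : trace (P * Pᴴ) = 1 := by
    rw [trace_vecMulVec_star_mul_conjTranspose, star_PhiPlus, PhiPlus_dotProduct_self (by omega),
      one_pow]
  rw [conjTranspose_sub, sub_mul, mul_sub, mul_sub, trace_sub, trace_sub, trace_sub, hMP, hPM, hPP,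
    trace_Mplus_mul_conjTranspose, epDual, opEnt_mul_Swap]
  field_simp
  ring

/-- for a dual-unitary `U`, the squared Frobenius norm of
`M̃₊[U] = M₊[U] - |Φ⁺⟩⟨Φ⁺|` equals `(q²-1)(1 - e_p(U))`. -/
theorem norm_sq_shifted_channel (q : ℕ) (hq : 2 ≤ q) (U : MQ q)
    (hU : U ∈ Matrix.unitaryGroup (Fin q × Fin q) ℂ)
    (hR1 : R1 U ∈ Matrix.unitaryGroup (Fin q × Fin q) ℂ) :
    Matrix.trace ((Mplus U - vecMulVec (PhiPlus q) (star (PhiPlus q))) *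
        (Mplus U - vecMulVec (PhiPlus q) (star (PhiPlus q)))ᴴ) =
      ((q : ℂ) ^ 2 - 1) * (1 - epDual U) :=
  norm_sq_shifted_channel_general q hq U hU
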